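/- Let ρ₁ be the MCP with γ = λ = 1 and α > 0. If x > max{α, 1}, then u = x is the unique minimizer of h(u) = ρ₁(u) + (1/(2α))(u − x)². -/
import Mathlib


/-- The MCP penalty with γ = λ = 1. -/
noncomputable def rho1 (u : ℝ) : ℝ := if |u| < 1 then |u| - u ^ 2 / 2 else 1 / 2

/-- If x > max{α, 1}, then x is the unique minimizer of
h(u) = ρ₁(u) + (1/(2α))(u − x)². -/
theorem prox_rho1_identity_case (α x : ℝ) (hα : 0 < α) (hx : max α 1 < x) :
    ∀ u : ℝ, u ≠ x →
      rho1 x + (1 / (2 * α)) * (x - x) ^ 2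
        < rho1 u + (1 / (2 * α)) * (u - x) ^ 2 := by
  intro u hu
  have hx1 : (1:ℝ) < x := lt_of_le_of_lt (le_max_right α 1) hx
  have hxα : α < x := lt_of_le_of_lt (le_max_left α 1) hx
  have h2α : (0:ℝ) < 2 * α := by linarith
  have hrx : rho1 x = 1 / 2 := by
    unfold rho1
    rw [if_neg]
    rw [abs_of_pos (by linarith : (0:ℝ) < x)]
    linarith
  rw [hrx, sub_self]
  by_cases hcase : |u| < 1
  · have ht0 : 0 ≤ |u| := abs_nonneg u
    have hut : u ≤ |u| := le_abs_self u
    have hru : rho1 u = |u| - u ^ 2 / 2 := by unfold rho1; rw [if_pos hcase]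
    rw [hru]
    have key : α * (1 - |u|) ^ 2 < (x - |u|) ^ 2 := by
      rcases le_or_gt α 1 with h1 | h1
      · nlinarith
      · nlinarith [mul_pos (sub_pos.mpr hxα) (sub_pos.mpr hcase),
          mul_nonneg (sub_nonneg.mpr h1.le) (sub_nonneg.mpr hcase.le)]
    have h2 : (x - |u|) ^ 2 ≤ (u - x) ^ 2 := by nlinarith
    have h3 : α * (1 - |u|) ^ 2 < (u - x) ^ 2 := lt_of_lt_of_le key h2
    have h4 : (1 - |u|) ^ 2 / 2 < 1 / (2 * α) * (u - x) ^ 2 := by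
      rw [show 1 / (2 * α) * (u - x) ^ 2 = (u - x) ^ 2 / (2 * α) by ring,
        div_lt_div_iff₀ two_pos h2α]
      nlinarith
    nlinarith [sq_abs u]
  · have hru : rho1 u = 1 / 2 := by unfold rho1; rw [if_neg hcase]
    rw [hru]
    have hpos : 0 < (u - x) ^ 2 := by
      have : u - x ≠ 0 := sub_ne_zero.mpr hu
      positivity
    have : 0 < 1 / (2 * α) * (u - x) ^ 2 := by positivity
    nlinarith
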